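/- arXiv:1209.5991 — 4 statements merged into one kernel-verified Lean document; each statement's English description precedes it below -/
import Mathlib

section
/- For a Gaussian free field on a finite connected weighted graph, the effective resistance function is supermodular in the observed set: for any vertex set S, any distinct x,y ∉ S, and any vertex t, R_eff(t, S) + R_eff(t, S∪{x,y}) ≥ R_eff(t, S∪{x}) + R_eff(t, S∪{y}), where R_eff(t, A) is the effective resistance between t and the set A (taken to be 0 if t ∈ A). -/
open scoped ENNReal

variable {V : Type*} [Fintype V] [DecidableEq V]

/-- A unit flow from the set `A` to the vertex `t`. -/
def IsUnitFlow (A : Finset V) (t : V) (f : V → V → ℝ) : Prop :=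
  (∀ i j, f i j = - f j i) ∧
  (∀ i, i ∉ A → i ≠ t → ∑ j, f i j = 0) ∧
  (∑ j, f j t = 1)

/-- The energy `(1/2) ∑_{i,j} f(i,j)² r(i,j)` of a flow `f` w.r.t. resistances `r`. -/
noncomputable def energy (r f : V → V → ℝ) : ℝ :=
  (1 / 2) * ∑ i, ∑ j, (f i j) ^ 2 * r i j

/-- Effective resistance between `t` and the set `A` in the network `(G, r)`, by Thomson's
principle: the infimum of energies of unit flows from `A` to `t` supported on edges of `G`
(`0` if `t ∈ A`). -/
noncomputable def Reff (G : SimpleGraph V) (r : V → V → ℝ) (A : Finset V) (t : V) : ℝ≥0∞ :=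
  if t ∈ A then 0
  else ⨅ f : {f : V → V → ℝ // IsUnitFlow A t f ∧ ∀ i j, ¬ G.Adj i j → f i j = 0},
    ENNReal.ofReal (energy r f.1)

/-!
Let `φ₁` and `φ₂` be the potentials of the unit currents to `t` from `S` and from `S ∪ {x, y}`;
by Thomson's principle their energies are `R_eff(t, S)` and `R_eff(t, S ∪ {x, y})`. Let `ψ ≤ 0`
be the potential grounded on `S` whose only source off `S` absorbs at `x` the current `d ≥ 0`
that `φ₂` sends out of `x`. Then `φ₁ - ψ` and `φ₂ + ψ` drive unit flows to `t` from `S ∪ {x}`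
and from `S ∪ {y}`, and by Green's identity their total energy differs from that of `φ₁` and
`φ₂` by `2 ψ(y) · (current out of y under φ₂) ≤ 0`.
-/

open Finset

open Classical in
noncomputable def conductance (G : SimpleGraph V) (r : V → V → ℝ) (i j : V) : ℝ :=
  if G.Adj i j then (r i j)⁻¹ else 0

noncomputable def potentialFlow (G : SimpleGraph V) (r : V → V → ℝ) :
    (V → ℝ) →ₗ[ℝ] V → V → ℝ where
  toFun φ i j := (φ i - φ j) * conductance G r i j
  map_add' _ _ := by ext; simp only [Pi.add_apply]; ring
  map_smul' _ _ := by ext; simp only [Pi.smul_apply, smul_eq_mul, RingHom.id_apply]; ring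

def divergence : (V → V → ℝ) →ₗ[ℝ] V → ℝ where
  toFun f v := ∑ j, f v j
  map_add' _ _ := by ext; simp only [Pi.add_apply, sum_add_distrib]
  map_smul' _ _ := by ext; simp only [Pi.smul_apply, smul_eq_mul, RingHom.id_apply, mul_sum]

noncomputable def laplacian (G : SimpleGraph V) (r : V → V → ℝ) : (V → ℝ) →ₗ[ℝ] V → ℝ :=
  divergence ∘ₗ potentialFlow G r

def flowPairing (r f g : V → V → ℝ) : ℝ :=
  ∑ i, ∑ j, f i j * g i j * r i j

/-- `φ` is the potential of the unit current from `A` to `t`, grounded on `A`. -/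
def IsUnitPotential (G : SimpleGraph V) (r : V → V → ℝ) (A : Finset V) (t : V) (φ : V → ℝ) :
    Prop :=
  (∀ v ∈ A, φ v = 0) ∧ ∀ v ∉ A, laplacian G r φ v = if v = t then -1 else 0

section Network

variable {G : SimpleGraph V} {r : V → V → ℝ}

section

omit [Fintype V] [DecidableEq V]

theorem potentialFlow_apply (φ : V → ℝ) (i j : V) :
    potentialFlow G r φ i j = (φ i - φ j) * conductance G r i j := rfl

theorem conductance_pos (hrpos : ∀ i j, G.Adj i j → 0 < r i j) {i j : V} (h : G.Adj i j) :
    0 < conductance G r i j := by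
  simpa [conductance, h] using hrpos i j h

theorem conductance_nonneg (hrpos : ∀ i j, G.Adj i j → 0 < r i j) (i j : V) :
    0 ≤ conductance G r i j := by
  by_cases h : G.Adj i j
  · exact (conductance_pos hrpos h).le
  · simp [conductance, h]

theorem conductance_comm (hrsym : ∀ i j, r i j = r j i) (i j : V) :
    conductance G r i j = conductance G r j i := by
  by_cases h : G.Adj i j
  · simp [conductance, h, h.symm, hrsym i j]
  · simp [conductance, h, mt G.adj_symm h]

theorem potentialFlow_antisymm (hrsym : ∀ i j, r i j = r j i) (φ : V → ℝ) (i j : V) :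
    potentialFlow G r φ i j = -potentialFlow G r φ j i := by
  simp only [potentialFlow_apply, conductance_comm hrsym i j]; ring

theorem potentialFlow_of_not_adj (φ : V → ℝ) {i j : V} (h : ¬ G.Adj i j) :
    potentialFlow G r φ i j = 0 := by
  simp [potentialFlow_apply, conductance, h]

theorem potentialFlow_mul_resistance (hrpos : ∀ i j, G.Adj i j → 0 < r i j) (φ : V → ℝ)
    {i j : V} (h : G.Adj i j) : potentialFlow G r φ i j * r i j = φ i - φ j := by
  simp [potentialFlow_apply, conductance, h, (hrpos i j h).ne']

end

section

omit [DecidableEq V]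

theorem divergence_apply (f : V → V → ℝ) (v : V) : divergence f v = ∑ j, f v j := rfl

theorem divergence_potentialFlow (φ : V → ℝ) (v : V) :
    divergence (potentialFlow G r φ) v = laplacian G r φ v := rfl

theorem sum_apply_eq_neg_divergence {f : V → V → ℝ} (hf : ∀ i j, f i j = -f j i) (v : V) :
    ∑ j, f j v = -divergence f v := by
  simp [divergence_apply, hf _ v]

theorem energy_add (f g : V → V → ℝ) :
    energy r (f + g) = energy r f + energy r g + flowPairing r f g := by
  simp only [energy, flowPairing, Pi.add_apply, mul_sum, ← sum_add_distrib]
  exact sum_congr rfl fun i _ => sum_congr rfl fun j _ => by ring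

theorem energy_sub_add_energy_add (f g h : V → V → ℝ) :
    energy r (f - h) + energy r (g + h) = energy r f + energy r g + flowPairing r h (h + g - f) := by
  simp only [energy, flowPairing, Pi.add_apply, Pi.sub_apply, mul_sum, ← sum_add_distrib]
  exact sum_congr rfl fun i _ => sum_congr rfl fun j _ => by ring

theorem energy_nonneg (hrpos : ∀ i j, G.Adj i j → 0 < r i j) {f : V → V → ℝ}
    (hfs : ∀ i j, ¬ G.Adj i j → f i j = 0) : 0 ≤ energy r f := by
  refine mul_nonneg (by norm_num) (sum_nonneg fun i _ => sum_nonneg fun j _ => ?_)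
  by_cases h : G.Adj i j
  · exact mul_nonneg (sq_nonneg _) (hrpos i j h).le
  · simp [hfs i j h]

theorem energy_potentialFlow_nonneg (hrpos : ∀ i j, G.Adj i j → 0 < r i j) (φ : V → ℝ) :
    0 ≤ energy r (potentialFlow G r φ) :=
  energy_nonneg hrpos fun _ _ => potentialFlow_of_not_adj φ

theorem sum_divergence_eq_zero {f : V → V → ℝ} (hf : ∀ i j, f i j = -f j i) :
    ∑ v, divergence f v = 0 := by
  have h : ∑ v, divergence f v = -∑ v, divergence f v := by
    rw [← sum_neg_distrib]
    simp_rw [← sum_apply_eq_neg_divergence hf]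
    exact sum_comm
  linarith

theorem flowPairing_potentialFlow (hrpos : ∀ i j, G.Adj i j → 0 < r i j) (φ : V → ℝ)
    {g : V → V → ℝ} (hg : ∀ i j, g i j = -g j i) (hgs : ∀ i j, ¬ G.Adj i j → g i j = 0) :
    flowPairing r (potentialFlow G r φ) g = 2 * ∑ v, φ v * divergence g v := by
  have hedge : ∀ i j, potentialFlow G r φ i j * g i j * r i j = φ i * g i j + φ j * g j i := by
    intro i j
    by_cases h : G.Adj i j
    · rw [mul_right_comm, potentialFlow_mul_resistance hrpos φ h, hg j i]; ring
    · simp [hgs i j h, hgs j i fun h' => h h'.symm]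
  simp only [flowPairing, hedge, sum_add_distrib]
  rw [sum_comm (f := fun i j => φ j * g j i), two_mul]
  simp only [divergence_apply, mul_sum]

theorem energy_potentialFlow_sub_add_le (hrsym : ∀ i j, r i j = r j i)
    (hrpos : ∀ i j, G.Adj i j → 0 < r i j) {φ₁ φ₂ ψ : V → ℝ}
    (h : ∑ v, ψ v * laplacian G r (ψ + φ₂ - φ₁) v ≤ 0) :
    energy r (potentialFlow G r (φ₁ - ψ)) + energy r (potentialFlow G r (φ₂ + ψ))
      ≤ energy r (potentialFlow G r φ₁) + energy r (potentialFlow G r φ₂) := by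
  rw [map_sub, map_add, energy_sub_add_energy_add, ← map_add, ← map_sub,
    flowPairing_potentialFlow hrpos ψ (potentialFlow_antisymm hrsym _)
      fun _ _ => potentialFlow_of_not_adj _]
  simp only [divergence_potentialFlow]
  linarith

theorem laplacian_nonneg_of_forall_le (hrpos : ∀ i j, G.Adj i j → 0 < r i j) {φ : V → ℝ} {v : V}
    (hmax : ∀ j, φ j ≤ φ v) : 0 ≤ laplacian G r φ v :=
  sum_nonneg fun j _ => mul_nonneg (sub_nonneg.2 (hmax j)) (conductance_nonneg hrpos v j)

theorem eq_of_adj_of_laplacian_nonpos (hrpos : ∀ i j, G.Adj i j → 0 < r i j) {φ : V → ℝ}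
    {v w : V} (hmax : ∀ j, φ j ≤ φ v) (hlap : laplacian G r φ v ≤ 0) (hvw : G.Adj v w) :
    φ w = φ v := by
  have hterms : ∀ j ∈ univ, 0 ≤ (φ v - φ j) * conductance G r v j :=
    fun j _ => mul_nonneg (sub_nonneg.2 (hmax j)) (conductance_nonneg hrpos v j)
  have hw := (sum_eq_zero_iff_of_nonneg hterms).1
    (le_antisymm hlap (laplacian_nonneg_of_forall_le hrpos hmax)) w (mem_univ w)
  rcases mul_eq_zero.1 hw with h | h
  · linarith
  · exact absurd h (conductance_pos hrpos hvw).ne'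

end

theorem IsUnitFlow.divergence_eq {A : Finset V} {t : V} {f : V → V → ℝ}
    (hf : IsUnitFlow A t f) {v : V} (hv : v ∉ A) :
    divergence f v = if v = t then -1 else 0 := by
  split_ifs with hvt
  · subst hvt; linarith [sum_apply_eq_neg_divergence hf.1 v, hf.2.2]
  · exact hf.2.1 v hv hvt

theorem isUnitFlow_of_divergence {A : Finset V} {t : V} {f : V → V → ℝ} (ht : t ∉ A)
    (hf : ∀ i j, f i j = -f j i) (hdiv : ∀ v ∉ A, divergence f v = if v = t then -1 else 0) :
    IsUnitFlow A t f := by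
  refine ⟨hf, fun v hv hvt => by simpa [hvt, divergence_apply] using hdiv v hv, ?_⟩
  rw [sum_apply_eq_neg_divergence hf, hdiv t ht, if_pos rfl, neg_neg]

theorem isUnitFlow_potentialFlow (hrsym : ∀ i j, r i j = r j i) {A : Finset V} {t : V}
    (ht : t ∉ A) {φ : V → ℝ} (hφ : ∀ v ∉ A, laplacian G r φ v = if v = t then -1 else 0) :
    IsUnitFlow A t (potentialFlow G r φ) :=
  isUnitFlow_of_divergence ht (potentialFlow_antisymm hrsym φ) hφ

theorem not_isUnitFlow_empty (t : V) (f : V → V → ℝ) : ¬ IsUnitFlow ∅ t f := by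
  intro hf
  have h := sum_divergence_eq_zero hf.1
  simp [hf.divergence_eq (notMem_empty _)] at h

theorem nonpos_of_laplacian_nonpos (hconn : G.Connected) (hrpos : ∀ i j, G.Adj i j → 0 < r i j)
    {B : Finset V} (hB : B.Nonempty) {φ : V → ℝ} (hφB : ∀ v ∈ B, φ v ≤ 0)
    (hlap : ∀ v ∉ B, laplacian G r φ v ≤ 0) (v : V) : φ v ≤ 0 := by
  obtain ⟨b, hb⟩ := hB
  have : Nonempty V := ⟨b⟩
  obtain ⟨m, hm⟩ := Finite.exists_max φ
  suffices h : ∀ u, G.Walk u b → φ u = φ m → φ m ≤ 0 from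
    (hm v).trans (h m (hconn.preconnected m b).some rfl)
  intro u p
  induction p with
  | nil => exact fun hu => hu ▸ hφB _ hb
  | @cons u w _ huw _ ih =>
    intro hu
    by_cases huB : u ∈ B
    · exact hu ▸ hφB u huB
    · exact ih hb (by rw [eq_of_adj_of_laplacian_nonpos hrpos (hu ▸ hm) (hlap u huB) huw, hu])

theorem eq_zero_of_laplacian_eq_zero (hconn : G.Connected) (hrpos : ∀ i j, G.Adj i j → 0 < r i j)
    {B : Finset V} (hB : B.Nonempty) {φ : V → ℝ} (hφB : ∀ v ∈ B, φ v = 0)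
    (hlap : ∀ v ∉ B, laplacian G r φ v = 0) : φ = 0 := by
  ext v
  refine le_antisymm (nonpos_of_laplacian_nonpos hconn hrpos hB (fun u hu => (hφB u hu).le)
    (fun u hu => (hlap u hu).le) v) (neg_nonpos.1 ?_)
  refine nonpos_of_laplacian_nonpos (φ := -φ) hconn hrpos hB (fun u hu => by simp [hφB u hu])
    (fun u hu => ?_) v
  simp [map_neg, hlap u hu]

theorem exists_laplacian_eq (hconn : G.Connected) (hrpos : ∀ i j, G.Adj i j → 0 < r i j)
    {B : Finset V} (hB : B.Nonempty) (c : V → ℝ) :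
    ∃ φ : V → ℝ, (∀ v ∈ B, φ v = 0) ∧ ∀ v ∉ B, laplacian G r φ v = c v := by
  let T : (V → ℝ) →ₗ[ℝ] V → ℝ :=
    { toFun := fun φ v => if v ∈ B then φ v else laplacian G r φ v
      map_add' := fun φ ψ => by ext v; by_cases hv : v ∈ B <;> simp [hv]
      map_smul' := fun a φ => by ext v; by_cases hv : v ∈ B <;> simp [hv] }
  have hT : ∀ φ v, T φ v = if v ∈ B then φ v else laplacian G r φ v := fun _ _ => rfl
  have hinj : Function.Injective T := by
    refine (injective_iff_map_eq_zero T).2 fun φ hφ => ?_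
    refine eq_zero_of_laplacian_eq_zero hconn hrpos hB (fun v hv => ?_) (fun v hv => ?_)
    · simpa [hT, hv] using congrFun hφ v
    · simpa [hT, hv] using congrFun hφ v
  obtain ⟨φ, hφ⟩ := LinearMap.injective_iff_surjective.1 hinj fun v => if v ∈ B then 0 else c v
  refine ⟨φ, fun v hv => ?_, fun v hv => ?_⟩
  · simpa [hT, hv] using congrFun hφ v
  · simpa [hT, hv] using congrFun hφ v

theorem exists_laplacian_eq_of_nonpos (hconn : G.Connected)
    (hrpos : ∀ i j, G.Adj i j → 0 < r i j) {B : Finset V} (hB : B.Nonempty) {c : V → ℝ}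
    (hc : ∀ v, c v ≤ 0) :
    ∃ φ : V → ℝ, (∀ v ∈ B, φ v = 0) ∧ (∀ v ∉ B, laplacian G r φ v = c v) ∧ ∀ v, φ v ≤ 0 := by
  obtain ⟨φ, hφB, hφ⟩ := exists_laplacian_eq hconn hrpos hB c
  exact ⟨φ, hφB, hφ, nonpos_of_laplacian_nonpos hconn hrpos hB (fun v hv => (hφB v hv).le)
    fun v hv => (hφ v hv).trans_le (hc v)⟩

theorem Reff_of_mem {A : Finset V} {t : V} (ht : t ∈ A) : Reff G r A t = 0 := if_pos ht

theorem Reff_le_ofReal_energy {A : Finset V} {t : V} (ht : t ∉ A) {f : V → V → ℝ}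
    (hf : IsUnitFlow A t f) (hfs : ∀ i j, ¬ G.Adj i j → f i j = 0) :
    Reff G r A t ≤ ENNReal.ofReal (energy r f) := by
  rw [Reff, if_neg ht]
  exact iInf_le_of_le ⟨f, hf, hfs⟩ le_rfl

theorem le_Reff {A : Finset V} {t : V} (ht : t ∉ A) {e : ℝ≥0∞}
    (h : ∀ f, IsUnitFlow A t f → (∀ i j, ¬ G.Adj i j → f i j = 0) →
      e ≤ ENNReal.ofReal (energy r f)) : e ≤ Reff G r A t := by
  rw [Reff, if_neg ht]
  exact le_iInf fun f => h f.1 f.2.1 f.2.2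

theorem Reff_anti {A B : Finset V} (hAB : A ⊆ B) (t : V) : Reff G r B t ≤ Reff G r A t := by
  by_cases ht : t ∈ B
  · simp [Reff_of_mem ht]
  refine le_Reff (fun h => ht (hAB h)) fun f hf hfs => Reff_le_ofReal_energy ht ?_ hfs
  exact ⟨hf.1, fun v hv => hf.2.1 v (fun h => hv (hAB h)), hf.2.2⟩

theorem Reff_empty (t : V) : Reff G r ∅ t = ⊤ := by
  rw [Reff, if_neg (notMem_empty t)]
  have : IsEmpty {f : V → V → ℝ // IsUnitFlow ∅ t f ∧ ∀ i j, ¬ G.Adj i j → f i j = 0} :=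
    ⟨fun f => not_isUnitFlow_empty t f.1 f.2.1⟩
  exact iInf_of_empty _

theorem Reff_le_ofReal_energy_potentialFlow (hrsym : ∀ i j, r i j = r j i) {A : Finset V}
    {t : V} (ht : t ∉ A) {φ : V → ℝ}
    (hφ : ∀ v ∉ A, laplacian G r φ v = if v = t then -1 else 0) :
    Reff G r A t ≤ ENNReal.ofReal (energy r (potentialFlow G r φ)) :=
  Reff_le_ofReal_energy ht (isUnitFlow_potentialFlow hrsym ht hφ)
    fun _ _ => potentialFlow_of_not_adj φ

theorem exists_isUnitPotential (hconn : G.Connected) (hrpos : ∀ i j, G.Adj i j → 0 < r i j)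
    {A : Finset V} (hA : A.Nonempty) (t : V) : ∃ φ, IsUnitPotential G r A t φ :=
  exists_laplacian_eq hconn hrpos hA _

namespace IsUnitPotential

variable {A : Finset V} {t : V} {φ : V → ℝ}

theorem nonpos (hφ : IsUnitPotential G r A t φ) (hconn : G.Connected)
    (hrpos : ∀ i j, G.Adj i j → 0 < r i j) (hA : A.Nonempty) (v : V) : φ v ≤ 0 := by
  refine nonpos_of_laplacian_nonpos hconn hrpos hA (fun u hu => (hφ.1 u hu).le)
    (fun u hu => ?_) v
  rw [hφ.2 u hu]
  split_ifs <;> norm_num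

/-- Thomson's principle. -/
theorem energy_le (hφ : IsUnitPotential G r A t φ) (hrsym : ∀ i j, r i j = r j i)
    (hrpos : ∀ i j, G.Adj i j → 0 < r i j) {f : V → V → ℝ} (hf : IsUnitFlow A t f)
    (hfs : ∀ i j, ¬ G.Adj i j → f i j = 0) :
    energy r (potentialFlow G r φ) ≤ energy r f := by
  set g := f - potentialFlow G r φ
  have hg : ∀ i j, g i j = -g j i := fun i j => by
    simp only [g, Pi.sub_apply, hf.1 i j, potentialFlow_antisymm hrsym φ i j]; ring
  have hgs : ∀ i j, ¬ G.Adj i j → g i j = 0 := fun i j h => by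
    simp [g, hfs i j h, potentialFlow_of_not_adj φ h]
  have hpair : flowPairing r (potentialFlow G r φ) g = 0 := by
    rw [flowPairing_potentialFlow hrpos φ hg hgs]
    refine mul_eq_zero_of_right _ (sum_eq_zero fun v _ => ?_)
    by_cases hv : v ∈ A
    · simp [hφ.1 v hv]
    · simp [g, hf.divergence_eq hv, divergence_potentialFlow, hφ.2 v hv]
  have : f = potentialFlow G r φ + g := by simp [g]
  rw [this, energy_add, hpair]
  linarith [energy_nonneg hrpos hgs]

theorem Reff_eq (hφ : IsUnitPotential G r A t φ) (hrsym : ∀ i j, r i j = r j i)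
    (hrpos : ∀ i j, G.Adj i j → 0 < r i j) (ht : t ∉ A) :
    Reff G r A t = ENNReal.ofReal (energy r (potentialFlow G r φ)) :=
  le_antisymm (Reff_le_ofReal_energy_potentialFlow hrsym ht hφ.2)
    (le_Reff ht fun _ hf hfs => ENNReal.ofReal_le_ofReal (hφ.energy_le hrsym hrpos hf hfs))

end IsUnitPotential

theorem Reff_union_add_Reff_union_le (hconn : G.Connected) (hrsym : ∀ i j, r i j = r j i)
    (hrpos : ∀ i j, G.Adj i j → 0 < r i j) {S : Finset V} (hS : S.Nonempty) {x y t : V}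
    (ht : t ∉ S ∪ {x, y}) {φ₁ φ₂ : V → ℝ}
    (hφ₁ : IsUnitPotential G r S t φ₁) (hφ₂ : IsUnitPotential G r (S ∪ {x, y}) t φ₂) :
    Reff G r (S ∪ {x}) t + Reff G r (S ∪ {y}) t ≤
      ENNReal.ofReal (energy r (potentialFlow G r φ₁)) +
        ENNReal.ofReal (energy r (potentialFlow G r φ₂)) := by
  simp only [mem_union, mem_insert, mem_singleton, not_or] at ht
  obtain ⟨htS, htx, hty⟩ := ht
  have hflux : ∀ v ∈ ({x, y} : Finset V), 0 ≤ laplacian G r φ₂ v := fun v hv =>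
    laplacian_nonneg_of_forall_le hrpos fun j => by
      rw [hφ₂.1 v (mem_union_right _ hv)]
      exact hφ₂.nonpos hconn hrpos (hS.mono subset_union_left) j
  obtain ⟨ψ, hψS, hψ, hψle⟩ := exists_laplacian_eq_of_nonpos hconn hrpos hS
    (c := fun v => if v = x then -laplacian G r φ₂ x else 0)
    fun v => by split_ifs <;> linarith [hflux x (by simp)]
  have h₁ : ∀ v ∉ S ∪ {x}, laplacian G r (φ₁ - ψ) v = if v = t then -1 else 0 := by
    intro v hv
    simp only [mem_union, mem_singleton, not_or] at hv
    simp [hφ₁.2 v hv.1, hψ v hv.1, hv.2]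
  have h₂ : ∀ v ∉ S ∪ {y}, laplacian G r (φ₂ + ψ) v = if v = t then -1 else 0 := by
    intro v hv
    simp only [mem_union, mem_singleton, not_or] at hv
    obtain rfl | hvx := eq_or_ne v x
    · simp [hψ v hv.1, Ne.symm htx]
    · simp [hφ₂.2 v (by simp [hv.1, hv.2, hvx]), hψ v hv.1, hvx]
  have hcross : ∑ v, ψ v * laplacian G r (ψ + φ₂ - φ₁) v ≤ 0 := by
    refine sum_nonpos fun v _ => ?_
    by_cases hvS : v ∈ S
    · simp [hψS v hvS]
    obtain rfl | hvx := eq_or_ne v x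
    · simp [hψ v hvS, hφ₁.2 v hvS, Ne.symm htx]
    obtain rfl | hvy := eq_or_ne v y
    · simpa [hψ v hvS, hvx, hφ₁.2 v hvS, Ne.symm hty] using
        mul_nonpos_of_nonpos_of_nonneg (hψle v) (hflux v (by simp))
    · simp [hψ v hvS, hvx, hφ₁.2 v hvS, hφ₂.2 v (by simp [hvS, hvx, hvy])]
  calc Reff G r (S ∪ {x}) t + Reff G r (S ∪ {y}) t
      ≤ ENNReal.ofReal (energy r (potentialFlow G r (φ₁ - ψ))) +
          ENNReal.ofReal (energy r (potentialFlow G r (φ₂ + ψ))) :=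
        add_le_add (Reff_le_ofReal_energy_potentialFlow hrsym (by simp [htS, htx]) h₁)
          (Reff_le_ofReal_energy_potentialFlow hrsym (by simp [htS, hty]) h₂)
    _ ≤ _ := by
        rw [← ENNReal.ofReal_add (energy_potentialFlow_nonneg hrpos _)
            (energy_potentialFlow_nonneg hrpos _),
          ← ENNReal.ofReal_add (energy_potentialFlow_nonneg hrpos _)
            (energy_potentialFlow_nonneg hrpos _)]
        exact ENNReal.ofReal_le_ofReal (energy_potentialFlow_sub_add_le hrsym hrpos hcross)

end Network

theorem stmt4_general (G : SimpleGraph V) (hconn : G.Connected)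
    (r : V → V → ℝ) (hrsym : ∀ i j, r i j = r j i) (hrpos : ∀ i j, G.Adj i j → 0 < r i j)
    (S : Finset V) (x y : V) (t : V) :
    Reff G r (S ∪ {x}) t + Reff G r (S ∪ {y}) t
      ≤ Reff G r S t + Reff G r (S ∪ {x, y}) t := by
  by_cases htS : t ∈ S
  · simp [Reff_of_mem, htS]
  obtain rfl | htx := eq_or_ne t x
  · simpa [Reff_of_mem] using Reff_anti (G := G) (r := r) (subset_insert _ S) t
  obtain rfl | hty := eq_or_ne t y
  · simpa [Reff_of_mem] using Reff_anti (G := G) (r := r) (subset_insert _ S) t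
  obtain rfl | hS := S.eq_empty_or_nonempty
  · simp [Reff_empty]
  have ht : t ∉ S ∪ {x, y} := by simp [htS, htx, hty]
  obtain ⟨φ₁, hφ₁⟩ := exists_isUnitPotential hconn hrpos hS t
  obtain ⟨φ₂, hφ₂⟩ := exists_isUnitPotential hconn hrpos (hS.mono subset_union_left) t
  rw [hφ₁.Reff_eq hrsym hrpos htS, hφ₂.Reff_eq hrsym hrpos ht]
  exact Reff_union_add_Reff_union_le hconn hrsym hrpos hS ht hφ₁ hφ₂

/-- Supermodularity of the effective resistance in the observed set:
`R_eff(t, S) + R_eff(t, S∪{x,y}) ≥ R_eff(t, S∪{x}) + R_eff(t, S∪{y})`. -/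
theorem stmt4 (G : SimpleGraph V) (hconn : G.Connected)
    (r : V → V → ℝ) (hrsym : ∀ i j, r i j = r j i) (hrpos : ∀ i j, G.Adj i j → 0 < r i j)
    (S : Finset V) (x y : V) (hxy : x ≠ y) (hx : x ∉ S) (hy : y ∉ S) (t : V) :
    Reff G r (S ∪ {x}) t + Reff G r (S ∪ {y}) t
      ≤ Reff G r S t + Reff G r (S ∪ {x, y}) t :=
  stmt4_general G hconn r hrsym hrpos S x y t
end

section
/- Let Q, Q' be symmetric diagonally dominant n×n matrices with non-positive off-diagonal entries that are ε-close in the sense that e^{-ε}|Q[i,j]| ≤ |Q'[i,j]| ≤ e^{ε}|Q[i,j]| for all i≠j and e^{-ε}Σ_j Q[i,j] ≤ Σ_j Q'[i,j] ≤ e^{ε}Σ_j Q[i,j] for all i. If both have support V×V and integrating out a single variable k ∈ V yields matrices P = Marginal_{V,V\{k\}}(Q) and P' = Marginal_{V,V\{k\}}(Q'), where |P[i,j]| = |Q[i,j]| + |Q[i,k]||Q[j,k]|/Q[k,k] and row sums transform analogously, then P and P' are 3ε-close in the same sense. -/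
/-!
Write `P = elim Q k`. For `i, j ≠ k` the sign conditions turn the Schur complement formula into
`|P i j| = |Q i j| + |Q i k| |Q k j| / Q k k` and
`∑ⱼ P i j = ∑ⱼ Q i j + |Q i k| (∑ⱼ Q k j) / Q k k`,
and the pivot `Q k k = ∑ⱼ Q k j + ∑_{j ≠ k} |Q k j|` is itself `ε`-close to `Q' k k`.
Both quantities therefore have the shape `a + b c / d` with all four ingredients nonnegative and
`ε`-close, and multiplicative errors add up along products and quotients: `3ε`.
-/

/-- The `ε`-closeness relation on symmetric diagonally dominant matrices with non-positive
off-diagonal entries: off-diagonal entries are multiplicatively `e^{±ε}`-close in absolute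
value, and so are the row sums. -/
def GClose {n : ℕ} (ε : ℝ) (Q Q' : Matrix (Fin n) (Fin n) ℝ) : Prop :=
  (∀ i j, i ≠ j →
    Real.exp (-ε) * |Q i j| ≤ |Q' i j| ∧ |Q' i j| ≤ Real.exp ε * |Q i j|) ∧
  (∀ i, Real.exp (-ε) * (∑ j, Q i j) ≤ ∑ j, Q' i j ∧
    ∑ j, Q' i j ≤ Real.exp ε * (∑ j, Q i j))

/-- One step of Gaussian elimination (Schur complement) eliminating the variable `k`:
`Marginal_{V, V\{k}}(Q)`, with the row and column `k` zeroed out. -/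
noncomputable def elim {n : ℕ} (Q : Matrix (Fin n) (Fin n) ℝ) (k : Fin n) :
    Matrix (Fin n) (Fin n) ℝ :=
  Matrix.of fun i j => if i = k ∨ j = k then 0 else Q i j - Q i k * Q k j / Q k k

open Finset

def ExpClose (ε x y : ℝ) : Prop :=
  Real.exp (-ε) * x ≤ y ∧ y ≤ Real.exp ε * x

namespace ExpClose

variable {ε δ a a' b b' : ℝ}

lemma pos (h : ExpClose ε a a') (ha : 0 < a) : 0 < a' :=
  (mul_pos (Real.exp_pos _) ha).trans_le h.1

lemma nonneg (h : ExpClose ε a a') (ha : 0 ≤ a) : 0 ≤ a' :=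
  (mul_nonneg (Real.exp_pos _).le ha).trans h.1

lemma mono (h : ExpClose ε a a') (ha : 0 ≤ a) (hεδ : ε ≤ δ) : ExpClose δ a a' :=
  ⟨le_trans (by gcongr) h.1, h.2.trans (by gcongr)⟩

lemma add (ha : ExpClose ε a a') (hb : ExpClose ε b b') : ExpClose ε (a + b) (a' + b') :=
  ⟨by linarith [ha.1, hb.1], by linarith [ha.2, hb.2]⟩

lemma sum {ι : Type*} {s : Finset ι} {f g : ι → ℝ}
    (h : ∀ i ∈ s, ExpClose ε (f i) (g i)) :
    ExpClose ε (∑ i ∈ s, f i) (∑ i ∈ s, g i) :=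
  ⟨by rw [mul_sum]; exact sum_le_sum fun i hi => (h i hi).1,
    by rw [mul_sum]; exact sum_le_sum fun i hi => (h i hi).2⟩

lemma mul (ha : ExpClose ε a a') (hb : ExpClose δ b b') (ha0 : 0 ≤ a) (hb0 : 0 ≤ b) :
    ExpClose (ε + δ) (a * b) (a' * b') := by
  constructor
  · calc Real.exp (-(ε + δ)) * (a * b) = (Real.exp (-ε) * a) * (Real.exp (-δ) * b) := by
          rw [neg_add, Real.exp_add]; ring
      _ ≤ a' * b' := mul_le_mul ha.1 hb.1 (by positivity) (ha.nonneg ha0)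
  · calc a' * b' ≤ (Real.exp ε * a) * (Real.exp δ * b) :=
          mul_le_mul ha.2 hb.2 (hb.nonneg hb0) (by positivity)
      _ = Real.exp (ε + δ) * (a * b) := by rw [Real.exp_add]; ring

lemma inv (h : ExpClose ε a a') (ha : 0 < a) : ExpClose ε a⁻¹ a'⁻¹ := by
  have ha' := h.pos ha
  constructor
  · rw [Real.exp_neg, ← mul_inv]
    exact inv_anti₀ ha' h.2
  · rw [← inv_inv (Real.exp ε), ← Real.exp_neg, ← mul_inv]
    exact inv_anti₀ (by positivity) h.1

lemma add_mul_div {c c' d d' : ℝ} (hε : 0 ≤ ε) (ha : ExpClose ε a a') (hb : ExpClose ε b b')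
    (hc : ExpClose ε c c') (hd : ExpClose ε d d')
    (ha0 : 0 ≤ a) (hb0 : 0 ≤ b) (hc0 : 0 ≤ c) (hd0 : 0 < d) :
    ExpClose (3 * ε) (a + b * c / d) (a' + b' * c' / d') := by
  have hbcd : ExpClose (ε + ε + ε) (b * c * d⁻¹) (b' * c' * d'⁻¹) :=
    (hb.mul hc hb0 hc0).mul (hd.inv hd0) (mul_nonneg hb0 hc0) (inv_nonneg.2 hd0.le)
  rw [show ε + ε + ε = 3 * ε by ring] at hbcd
  simp only [div_eq_mul_inv]
  exact (ha.mono ha0 (by linarith)).add hbcd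

end ExpClose

section ZMatrix

variable {n : ℕ} {ε : ℝ} {Q Q' : Matrix (Fin n) (Fin n) ℝ}

lemma GClose.expClose_abs (h : GClose ε Q Q') {i j : Fin n} (hij : i ≠ j) :
    ExpClose ε |Q i j| |Q' i j| :=
  h.1 i j hij

lemma GClose.expClose_rowSum (h : GClose ε Q Q') (i : Fin n) :
    ExpClose ε (∑ j, Q i j) (∑ j, Q' i j) :=
  h.2 i

lemma diag_eq_sum_add_sum_abs (hQoff : ∀ i j, i ≠ j → Q i j ≤ 0) (k : Fin n) :
    Q k k = ∑ j, Q k j + ∑ j ∈ univ.erase k, |Q k j| := by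
  have habs : ∑ j ∈ univ.erase k, |Q k j| = -∑ j ∈ univ.erase k, Q k j := by
    rw [← sum_neg_distrib]
    exact sum_congr rfl fun j hj => abs_of_nonpos (hQoff k j (ne_of_mem_erase hj).symm)
  linarith [add_sum_erase univ (Q k) (mem_univ k)]

lemma GClose.expClose_diag (hQoff : ∀ i j, i ≠ j → Q i j ≤ 0)
    (hQ'off : ∀ i j, i ≠ j → Q' i j ≤ 0)
    (hclose : GClose ε Q Q') (k : Fin n) : ExpClose ε (Q k k) (Q' k k) := by
  rw [diag_eq_sum_add_sum_abs hQoff, diag_eq_sum_add_sum_abs hQ'off]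
  exact (hclose.expClose_rowSum k).add
    (ExpClose.sum fun j hj => hclose.expClose_abs (ne_of_mem_erase hj).symm)

lemma abs_elim_apply {k : Fin n} (hQoff : ∀ i j, i ≠ j → Q i j ≤ 0) (hQkk : 0 ≤ Q k k)
    {i j : Fin n} (hij : i ≠ j) (hik : i ≠ k) (hjk : j ≠ k) :
    |elim Q k i j| = |Q i j| + |Q i k| * |Q k j| / Q k k := by
  have hij' := hQoff i j hij
  have hik' := hQoff i k hik
  have hkj' := hQoff k j hjk.symm
  have hprod : 0 ≤ Q i k * Q k j / Q k k :=
    div_nonneg (mul_nonneg_of_nonpos_of_nonpos hik' hkj') hQkk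
  rw [elim, Matrix.of_apply, if_neg (by tauto), abs_of_nonpos (by linarith), abs_of_nonpos hij',
    abs_of_nonpos hik', abs_of_nonpos hkj']
  ring

lemma sum_elim_apply {k : Fin n} (hQoff : ∀ i j, i ≠ j → Q i j ≤ 0) (hQkk : Q k k ≠ 0)
    {i : Fin n} (hik : i ≠ k) :
    ∑ j, elim Q k i j = ∑ j, Q i j + |Q i k| * (∑ j, Q k j) / Q k k := by
  have hrow : ∑ j, elim Q k i j = ∑ j ∈ univ.erase k, (Q i j - Q i k * Q k j / Q k k) := by
    rw [← add_sum_erase univ _ (mem_univ k)]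
    simp only [elim, Matrix.of_apply, or_true, if_true, zero_add]
    exact sum_congr rfl fun j hj => if_neg (by simp [hik, ne_of_mem_erase hj])
  rw [hrow, sum_sub_distrib, ← sum_div, ← mul_sum, ← add_sum_erase univ (Q i) (mem_univ k),
    ← add_sum_erase univ (Q k) (mem_univ k), abs_of_nonpos (hQoff i k hik)]
  field_simp
  ring

end ZMatrix

theorem stmt9_general {n : ℕ} (ε : ℝ) (hε : 0 ≤ ε) (Q Q' : Matrix (Fin n) (Fin n) ℝ)
    (k : Fin n)
    (hQoff : ∀ i j, i ≠ j → Q i j ≤ 0) (hQ'off : ∀ i j, i ≠ j → Q' i j ≤ 0)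
    (hQdd : ∀ i, 0 ≤ ∑ j, Q i j)
    (hQkk : 0 < Q k k)
    (hclose : GClose ε Q Q') :
    GClose (3 * ε) (elim Q k) (elim Q' k) := by
  have hpivot := hclose.expClose_diag hQoff hQ'off k
  have hQ'kk : 0 < Q' k k := hpivot.pos hQkk
  refine ⟨fun i j hij => ?_, fun i => ?_⟩
  · by_cases hik : i = k
    · simp [elim, hik]
    by_cases hjk : j = k
    · simp [elim, hjk]
    rw [abs_elim_apply hQoff hQkk.le hij hik hjk, abs_elim_apply hQ'off hQ'kk.le hij hik hjk]
    exact (hclose.expClose_abs hij).add_mul_div hε (hclose.expClose_abs hik)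
      (hclose.expClose_abs (Ne.symm hjk)) hpivot
      (abs_nonneg _) (abs_nonneg _) (abs_nonneg _) hQkk
  · by_cases hik : i = k
    · simp [elim, hik]
    rw [sum_elim_apply hQoff hQkk.ne' hik, sum_elim_apply hQ'off hQ'kk.ne' hik]
    exact (hclose.expClose_rowSum i).add_mul_div hε (hclose.expClose_abs hik)
      (hclose.expClose_rowSum k) hpivot
      (hQdd i) (abs_nonneg _) (hQdd k) hQkk

/-- If `Q, Q'` are symmetric diagonally dominant matrices with non-positive off-diagonal
entries, supported on `V × V`, that are `ε`-close, then after integrating out a single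
variable `k ∈ V` the resulting matrices `Marginal_{V,V\{k}}(Q)` and `Marginal_{V,V\{k}}(Q')`
are `3ε`-close. -/
theorem stmt9 {n : ℕ} (ε : ℝ) (hε : 0 ≤ ε) (Q Q' : Matrix (Fin n) (Fin n) ℝ)
    (V : Finset (Fin n)) (k : Fin n) (hk : k ∈ V)
    (hQsym : Q.IsSymm) (hQ'sym : Q'.IsSymm)
    (hQoff : ∀ i j, i ≠ j → Q i j ≤ 0) (hQ'off : ∀ i j, i ≠ j → Q' i j ≤ 0)
    (hQdd : ∀ i, 0 ≤ ∑ j, Q i j) (hQ'dd : ∀ i, 0 ≤ ∑ j, Q' i j)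
    (hQsupp : ∀ i j, i ∉ V ∨ j ∉ V → Q i j = 0)
    (hQ'supp : ∀ i j, i ∉ V ∨ j ∉ V → Q' i j = 0)
    (hQkk : 0 < Q k k) (hQ'kk : 0 < Q' k k)
    (hclose : GClose ε Q Q') :
    GClose (3 * ε) (elim Q k) (elim Q' k) :=
  stmt9_general ε hε Q Q' k hQoff hQ'off hQdd hQkk hclose
end

section
/- Let Q, Q' be symmetric diagonally dominant n×n matrices with non-positive off-diagonal entries, both with support V×V, such that e^{-ε}|Q[i,j]| ≤ |Q'[i,j]| ≤ e^{ε}|Q[i,j]| for all i≠j and e^{-ε}Σ_j Q[i,j] ≤ Σ_j Q'[i,j] ≤ e^{ε}Σ_j Q[i,j] for all i. If Q[V,V] is positive definite, then e^{-ε}·Tr(Q[V,V]^{-1}) ≤ Tr(Q'[V,V]^{-1}) ≤ e^{ε}·Tr(Q[V,V]^{-1}). -/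
/-!
For symmetric `M` with non-positive off-diagonal entries and non-negative row sums,
`xᵀMx = ∑ᵢ (∑ⱼ Mᵢⱼ) xᵢ² + ½ ∑ᵢⱼ |Mᵢⱼ| (xᵢ - xⱼ)² ≥ 0`. The closeness hypotheses say exactly
that `Q' - e^{-ε} Q` and `Q - e^{-ε} Q'` are such matrices, so `e^{-ε} Q ≤ Q' ≤ e^{ε} Q` in the
Loewner order, and this survives passing to the principal submatrices on `V`.
Inversion is antitone on positive definite matrices by the matrix form of Thomson's principle,
`vᵀA⁻¹v = max_x (2 vᵀx - xᵀAx)`; comparing diagonal entries gives the trace bounds.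
-/

open Matrix

namespace Matrix

variable {n : Type*} [Fintype n]

theorem IsSymm.two_mul_dotProduct_mulVec_self {R : Type*} [CommRing R] {M : Matrix n n R}
    (hM : M.IsSymm) (x : n → R) :
    2 * (x ⬝ᵥ M *ᵥ x) =
      2 * ∑ i, (∑ j, M i j) * x i ^ 2 - ∑ i, ∑ j, M i j * (x i - x j) ^ 2 := by
  have hswap : ∑ i, ∑ j, M i j * x j ^ 2 = ∑ i, ∑ j, M i j * x i ^ 2 := by
    rw [Finset.sum_comm]
    simp_rw [hM.apply]
  have hsplit : ∑ i, ∑ j, M i j * (x i - x j) ^ 2 = ∑ i, ∑ j, M i j * x i ^ 2 +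
      ∑ i, ∑ j, M i j * x j ^ 2 - 2 * ∑ i, ∑ j, x i * (M i j * x j) := by
    simp only [Finset.mul_sum, ← Finset.sum_add_distrib, ← Finset.sum_sub_distrib]
    exact Finset.sum_congr rfl fun i _ => Finset.sum_congr rfl fun j _ => by ring
  have hquad : x ⬝ᵥ M *ᵥ x = ∑ i, ∑ j, x i * (M i j * x j) := by
    simp only [dotProduct, mulVec, Finset.mul_sum]
  rw [hsplit, hswap, hquad]
  simp only [Finset.sum_mul]
  ring

theorem posSemidef_of_isSymm_of_offDiag_nonpos_of_rowSum_nonneg {M : Matrix n n ℝ}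
    (hM : M.IsSymm) (hoff : ∀ i j, i ≠ j → M i j ≤ 0) (hrow : ∀ i, 0 ≤ ∑ j, M i j) :
    M.PosSemidef := by
  refine .of_dotProduct_mulVec_nonneg (isHermitian_iff_isSymm.mpr hM) fun x => ?_
  have hdiff : ∀ i j, 0 ≤ -(M i j * (x i - x j) ^ 2) := fun i j => by
    rcases eq_or_ne i j with rfl | hij
    · simp
    · exact neg_nonneg.mpr (mul_nonpos_of_nonpos_of_nonneg (hoff i j hij) (sq_nonneg _))
  have hform := hM.two_mul_dotProduct_mulVec_self x
  have hrows : 0 ≤ ∑ i, (∑ j, M i j) * x i ^ 2 :=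
    Finset.sum_nonneg fun i _ => mul_nonneg (hrow i) (sq_nonneg _)
  have hdiffs : 0 ≤ -∑ i, ∑ j, M i j * (x i - x j) ^ 2 := by
    simpa only [Finset.sum_neg_distrib] using
      Finset.sum_nonneg fun i _ => Finset.sum_nonneg fun j _ => hdiff i j
  rw [star_trivial]
  linarith

variable [DecidableEq n]

theorem PosDef.two_mul_dotProduct_sub_le {A : Matrix n n ℝ} (hA : A.PosDef) (v x : n → ℝ) :
    2 * (v ⬝ᵥ x) - x ⬝ᵥ A *ᵥ x ≤ v ⬝ᵥ A⁻¹ *ᵥ v := by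
  set w := A⁻¹ *ᵥ v
  have hAw : A *ᵥ w = v := by
    rw [mulVec_mulVec, mul_nonsing_inv A ((isUnit_iff_isUnit_det A).mp hA.isUnit), one_mulVec]
  have hsq := hA.posSemidef.dotProduct_mulVec_nonneg (x - w)
  have hwx : w ⬝ᵥ A *ᵥ x = v ⬝ᵥ x := by
    rw [dotProduct_mulVec, ← mulVec_transpose, isHermitian_iff_isSymm.mp hA.isHermitian, hAw]
  rw [star_trivial, mulVec_sub, dotProduct_sub, sub_dotProduct, sub_dotProduct, hAw, hwx,
    dotProduct_comm w v] at hsq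
  simp only [w] at hsq ⊢
  linarith [dotProduct_comm x v]

theorem PosDef.dotProduct_inv_mulVec_le {A B : Matrix n n ℝ} (hA : A.PosDef) (hB : B.PosDef)
    (hAB : (B - A).PosSemidef) (v : n → ℝ) : v ⬝ᵥ B⁻¹ *ᵥ v ≤ v ⬝ᵥ A⁻¹ *ᵥ v := by
  set x := B⁻¹ *ᵥ v
  have hBx : B *ᵥ x = v := by
    rw [mulVec_mulVec, mul_nonsing_inv B ((isUnit_iff_isUnit_det B).mp hB.isUnit), one_mulVec]
  have hgap := hAB.dotProduct_mulVec_nonneg x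
  rw [star_trivial, sub_mulVec, dotProduct_sub, hBx] at hgap
  have := hA.two_mul_dotProduct_sub_le v x
  linarith [dotProduct_comm x v]

theorem PosDef.trace_inv_le {A B : Matrix n n ℝ} (hA : A.PosDef) (hAB : (B - A).PosSemidef) :
    B⁻¹.trace ≤ A⁻¹.trace := by
  have hB : B.PosDef := by simpa using hA.add_posSemidef hAB
  refine Finset.sum_le_sum fun i _ => ?_
  simpa [mulVec_single, single_dotProduct] using
    hA.dotProduct_inv_mulVec_le hB hAB (Pi.single i 1)

theorem PosDef.mul_trace_inv_le {A B : Matrix n n ℝ} (hA : A.PosDef) {c : ℝ} (hc : 0 < c)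
    (hAB : (B - c • A).PosSemidef) : c * B⁻¹.trace ≤ A⁻¹.trace := by
  have := (hA.smul hc).trace_inv_le hAB
  have hinv : (c • A)⁻¹ = c⁻¹ • A⁻¹ := inv_eq_right_inv <| by
    rw [smul_mul_smul_comm, mul_inv_cancel₀ hc.ne',
      mul_nonsing_inv A ((isUnit_iff_isUnit_det A).mp hA.isUnit), one_smul]
  rw [hinv, trace_smul, smul_eq_mul] at this
  rwa [le_inv_mul_iff₀ hc] at this

end Matrix

theorem Real.exp_neg_mul_le_iff {ε a b : ℝ} : Real.exp (-ε) * a ≤ b ↔ a ≤ Real.exp ε * b := by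
  rw [Real.exp_neg, inv_mul_le_iff₀ (Real.exp_pos ε)]

namespace GClose

variable {n : ℕ} {ε : ℝ} {Q Q' : Matrix (Fin n) (Fin n) ℝ}

theorem symm (h : GClose ε Q Q') : GClose ε Q' Q :=
  ⟨fun i j hij => ⟨Real.exp_neg_mul_le_iff.mpr (h.1 i j hij).2,
      Real.exp_neg_mul_le_iff.mp (h.1 i j hij).1⟩,
    fun i => ⟨Real.exp_neg_mul_le_iff.mpr (h.2 i).2, Real.exp_neg_mul_le_iff.mp (h.2 i).1⟩⟩

theorem posSemidef_sub (h : GClose ε Q Q') (hQ : Q.IsSymm) (hQ' : Q'.IsSymm)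
    (hQoff : ∀ i j, i ≠ j → Q i j ≤ 0) (hQ'off : ∀ i j, i ≠ j → Q' i j ≤ 0) :
    (Q' - Real.exp (-ε) • Q).PosSemidef := by
  refine posSemidef_of_isSymm_of_offDiag_nonpos_of_rowSum_nonneg (hQ'.sub (hQ.smul _))
    (fun i j hij => ?_) fun i => ?_
  · have := (h.1 i j hij).1
    rw [abs_of_nonpos (hQoff i j hij), abs_of_nonpos (hQ'off i j hij)] at this
    simp only [Matrix.sub_apply, Matrix.smul_apply, smul_eq_mul]
    linarith
  · simp only [Matrix.sub_apply, Matrix.smul_apply, smul_eq_mul, Finset.sum_sub_distrib,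
      ← Finset.mul_sum]
    exact sub_nonneg.mpr (h.2 i).1

end GClose

theorem stmt10_general {n : ℕ} (ε : ℝ) (Q Q' : Matrix (Fin n) (Fin n) ℝ)
    (V : Finset (Fin n))
    (hQsym : Q.IsSymm) (hQ'sym : Q'.IsSymm)
    (hQoff : ∀ i j, i ≠ j → Q i j ≤ 0) (hQ'off : ∀ i j, i ≠ j → Q' i j ≤ 0)
    (hpd : (Q.submatrix (fun a : {i : Fin n // i ∈ V} => (a : Fin n))
      (fun a : {i : Fin n // i ∈ V} => (a : Fin n))).PosDef)
    (hclose : GClose ε Q Q') :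
    Real.exp (-ε) * Matrix.trace
        ((Q.submatrix (fun a : {i : Fin n // i ∈ V} => (a : Fin n))
          (fun a : {i : Fin n // i ∈ V} => (a : Fin n)))⁻¹)
      ≤ Matrix.trace
        ((Q'.submatrix (fun a : {i : Fin n // i ∈ V} => (a : Fin n))
          (fun a : {i : Fin n // i ∈ V} => (a : Fin n)))⁻¹)
    ∧ Matrix.trace
        ((Q'.submatrix (fun a : {i : Fin n // i ∈ V} => (a : Fin n))
          (fun a : {i : Fin n // i ∈ V} => (a : Fin n)))⁻¹)
      ≤ Real.exp ε * Matrix.trace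
        ((Q.submatrix (fun a : {i : Fin n // i ∈ V} => (a : Fin n))
          (fun a : {i : Fin n // i ∈ V} => (a : Fin n)))⁻¹) := by
  set e : {i : Fin n // i ∈ V} → Fin n := fun a => a
  have hQ'Q : (Q'.submatrix e e - Real.exp (-ε) • Q.submatrix e e).PosSemidef :=
    (hclose.posSemidef_sub hQsym hQ'sym hQoff hQ'off).submatrix e
  have hQQ' : (Q.submatrix e e - Real.exp (-ε) • Q'.submatrix e e).PosSemidef :=
    (hclose.symm.posSemidef_sub hQ'sym hQsym hQ'off hQoff).submatrix e
  have hpd' : (Q'.submatrix e e).PosDef := by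
    simpa using (hpd.smul (Real.exp_pos (-ε))).add_posSemidef hQ'Q
  exact ⟨hpd'.mul_trace_inv_le (Real.exp_pos _) hQQ',
    Real.exp_neg_mul_le_iff.mp (hpd.mul_trace_inv_le (Real.exp_pos _) hQ'Q)⟩

/-- If `Q, Q'` are symmetric diagonally dominant matrices with non-positive off-diagonal
entries, supported on `V × V` and `ε`-close, and `Q[V,V]` is positive definite, then
`e^{-ε}·Tr(Q[V,V]⁻¹) ≤ Tr(Q'[V,V]⁻¹) ≤ e^{ε}·Tr(Q[V,V]⁻¹)`. -/
theorem stmt10 {n : ℕ} (ε : ℝ) (hε : 0 ≤ ε) (Q Q' : Matrix (Fin n) (Fin n) ℝ)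
    (V : Finset (Fin n))
    (hQsym : Q.IsSymm) (hQ'sym : Q'.IsSymm)
    (hQoff : ∀ i j, i ≠ j → Q i j ≤ 0) (hQ'off : ∀ i j, i ≠ j → Q' i j ≤ 0)
    (hQdd : ∀ i, 0 ≤ ∑ j, Q i j) (hQ'dd : ∀ i, 0 ≤ ∑ j, Q' i j)
    (hQsupp : ∀ i j, i ∉ V ∨ j ∉ V → Q i j = 0)
    (hQ'supp : ∀ i j, i ∉ V ∨ j ∉ V → Q' i j = 0)
    (hpd : (Q.submatrix (fun a : {i : Fin n // i ∈ V} => (a : Fin n))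
      (fun a : {i : Fin n // i ∈ V} => (a : Fin n))).PosDef)
    (hclose : GClose ε Q Q') :
    Real.exp (-ε) * Matrix.trace
        ((Q.submatrix (fun a : {i : Fin n // i ∈ V} => (a : Fin n))
          (fun a : {i : Fin n // i ∈ V} => (a : Fin n)))⁻¹)
      ≤ Matrix.trace
        ((Q'.submatrix (fun a : {i : Fin n // i ∈ V} => (a : Fin n))
          (fun a : {i : Fin n // i ∈ V} => (a : Fin n)))⁻¹)
    ∧ Matrix.trace
        ((Q'.submatrix (fun a : {i : Fin n // i ∈ V} => (a : Fin n))
          (fun a : {i : Fin n // i ∈ V} => (a : Fin n)))⁻¹)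
      ≤ Real.exp ε * Matrix.trace
        ((Q.submatrix (fun a : {i : Fin n // i ∈ V} => (a : Fin n))
          (fun a : {i : Fin n // i ∈ V} => (a : Fin n)))⁻¹) :=
  stmt10_general ε Q Q' V hQsym hQ'sym hQoff hQ'off hpd hclose
end

section
/- For any k and 0 < ε ≤ 1/(k(4√2+4)), there exists a finite set R of k×k orthogonal matrices with |R| ≤ (2k·e^{εk/2}·(2/ε)^{k−1})^k such that for every k×k orthogonal matrix U there exists U'' ∈ R with (U''[:,i])^t U[:,i] > 1 − 12.5kε for every column i, and (U''[:,i])^t U[:,j] < 10(√2+1)√(kε) for all j ≠ i. -/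
/-!
Round every entry of an orthogonal matrix down to a grid of mesh `2√ε` and keep one orthogonal
matrix per occupied cell: this gives at most `(⌊1/√ε⌋ + 1)^(k²) ≤ (2/√ε)^(k²)` matrices, and
two matrices in the same cell have corresponding columns at Euclidean distance at most
`2√(kε)`. For unit columns `u, v` this yields `⟪v, u⟫ = 1 - ‖v - u‖² / 2 ≥ 1 - 2kε`, and for
`j ≠ i` Cauchy–Schwarz gives `⟪v_i, u_j⟫ = ⟪v_i - u_i, u_j⟫ ≤ ‖v_i - u_i‖ ≤ 2√(kε)`.
-/

open Matrix Finset

theorem exists_transversal_of_mapsTo {X β : Type*} {S : Set X} (f : X → β) {G : Finset β}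
    (hG : Set.MapsTo f S G) :
    ∃ R : Finset X, ↑R ⊆ S ∧ R.card ≤ G.card ∧ ∀ x ∈ S, ∃ y ∈ R, f y = f x := by
  classical
  rcases S.eq_empty_or_nonempty with rfl | ⟨x₀, -⟩
  · exact ⟨∅, by simp, by simp, by simp⟩
  have : Nonempty X := ⟨x₀⟩
  refine ⟨(G.filter (· ∈ f '' S)).image (Function.invFunOn f S), ?_,
    card_image_le.trans (card_filter_le _ _), fun x hx => ?_⟩
  · intro y hy
    obtain ⟨b, hb, rfl⟩ := mem_image.1 hy
    exact Function.invFunOn_mem (mem_filter.1 hb).2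
  · exact ⟨_, mem_image_of_mem _ (mem_filter.2 ⟨hG hx, x, hx, rfl⟩),
      Function.invFunOn_eq ⟨x, hx, rfl⟩⟩

theorem abs_sub_lt_of_natFloor_div_eq {δ a b : ℝ} (hδ : 0 < δ) (ha : 0 ≤ a) (hb : 0 ≤ b)
    (h : ⌊a / δ⌋₊ = ⌊b / δ⌋₊) : |a - b| < δ := by
  have ha' := Nat.floor_le (div_nonneg ha hδ.le)
  have hb' := Nat.floor_le (div_nonneg hb hδ.le)
  have ha'' := Nat.lt_floor_add_one (a / δ)
  have hb'' := Nat.lt_floor_add_one (b / δ)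
  rw [h] at ha' ha''
  have : |a / δ - b / δ| < 1 := abs_sub_lt_iff.2 ⟨by linarith, by linarith⟩
  rwa [← sub_div, abs_div, abs_of_pos hδ, div_lt_one hδ] at this

theorem Matrix.exists_finset_abs_sub_lt_of_abs_le_one {m n : Type*} [Fintype m] [Fintype n]
    [DecidableEq m] [DecidableEq n] {S : Set (Matrix m n ℝ)} (hS : ∀ U ∈ S, ∀ i j, |U i j| ≤ 1)
    {δ : ℝ} (hδ : 0 < δ) :
    ∃ R : Finset (Matrix m n ℝ), ↑R ⊆ S ∧
      R.card ≤ (⌊2 / δ⌋₊ + 1) ^ (Fintype.card n * Fintype.card m) ∧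
      ∀ U ∈ S, ∃ V ∈ R, ∀ i j, |V i j - U i j| < δ := by
  let cell : Matrix m n ℝ → m → n → ℕ := fun U i j => ⌊(U i j + 1) / δ⌋₊
  let G := Fintype.piFinset fun _ : m => Fintype.piFinset fun _ : n => range (⌊2 / δ⌋₊ + 1)
  have hG : Set.MapsTo cell S G := by
    intro U hU
    simp only [G, cell, mem_coe, Fintype.mem_piFinset, mem_range, Nat.lt_succ_iff]
    intro i j
    gcongr
    linarith [(abs_le.1 (hS U hU i j)).2]
  obtain ⟨R, hRS, hRcard, hR⟩ := exists_transversal_of_mapsTo cell hG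
  refine ⟨R, hRS, ?_, fun U hU => ?_⟩
  · simpa [G, Fintype.card_piFinset, prod_const, ← pow_mul] using hRcard
  · obtain ⟨V, hVR, hVU⟩ := hR U hU
    refine ⟨V, hVR, fun i j => ?_⟩
    have h := abs_sub_lt_of_natFloor_div_eq hδ (by linarith [(abs_le.1 (hS V (hRS hVR) i j)).1])
      (by linarith [(abs_le.1 (hS U hU i j)).1]) (congrFun (congrFun hVU i) j)
    rwa [add_sub_add_right_eq_sub] at h

section OrthonormalColumns

variable {m n : Type*} [Fintype m] {U V : Matrix m n ℝ}

theorem Matrix.sum_sq_sub_le_of_abs_sub_le {δ : ℝ} (h : ∀ r i, |V r i - U r i| ≤ δ) (i : n) :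
    ∑ r, (V r i - U r i) ^ 2 ≤ Fintype.card m * δ ^ 2 := by
  rw [← nsmul_eq_mul, ← card_univ]
  refine sum_le_card_nsmul _ _ _ fun r _ => ?_
  rw [← sq_abs]
  exact pow_le_pow_left₀ (abs_nonneg _) (h r i) 2

variable [DecidableEq n]

theorem Matrix.sum_mul_eq_one_apply_of_transpose_mul_self (hU : Uᵀ * U = 1) (i j : n) :
    ∑ r, U r i * U r j = (1 : Matrix n n ℝ) i j := by
  rw [← hU, mul_apply]
  rfl

theorem Matrix.abs_le_one_of_transpose_mul_self (hU : Uᵀ * U = 1) (r : m) (i : n) :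
    |U r i| ≤ 1 := by
  have hcol := sum_mul_eq_one_apply_of_transpose_mul_self hU i i
  rw [one_apply_eq] at hcol
  refine abs_le_one_iff_mul_self_le_one.2 (hcol ▸ ?_)
  exact single_le_sum (f := fun r => U r i * U r i) (fun r _ => mul_self_nonneg _) (mem_univ r)

theorem Matrix.sum_mul_eq_one_sub_of_transpose_mul_self (hU : Uᵀ * U = 1) (hV : Vᵀ * V = 1)
    (i : n) : ∑ r, V r i * U r i = 1 - (∑ r, (V r i - U r i) ^ 2) / 2 := by
  have hUi := sum_mul_eq_one_apply_of_transpose_mul_self hU i i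
  have hVi := sum_mul_eq_one_apply_of_transpose_mul_self hV i i
  rw [one_apply_eq] at hUi hVi
  have hexpand : ∑ r, (V r i - U r i) ^ 2
      = ∑ r, V r i * V r i + ∑ r, U r i * U r i - 2 * ∑ r, V r i * U r i := by
    rw [mul_sum, ← sum_add_distrib, ← sum_sub_distrib]
    exact sum_congr rfl fun r _ => by ring
  rw [hexpand, hUi, hVi]
  ring

theorem Matrix.sum_mul_le_sqrt_of_transpose_mul_self (hU : Uᵀ * U = 1) {i j : n} (hji : j ≠ i) :
    ∑ r, V r i * U r j ≤ √(∑ r, (V r i - U r i) ^ 2) := by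
  have hUij := sum_mul_eq_one_apply_of_transpose_mul_self hU i j
  have hUj := sum_mul_eq_one_apply_of_transpose_mul_self hU j j
  rw [one_apply_ne hji.symm] at hUij
  rw [one_apply_eq] at hUj
  calc ∑ r, V r i * U r j = ∑ r, (V r i - U r i) * U r j := by
        simp only [sub_mul, sum_sub_distrib, hUij, sub_zero]
    _ ≤ √(∑ r, (V r i - U r i) ^ 2) * √(∑ r, U r j ^ 2) := Real.sum_mul_le_sqrt_mul_sqrt _ _ _
    _ = √(∑ r, (V r i - U r i) ^ 2) := by simp only [sq, hUj, Real.sqrt_one, mul_one]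

end OrthonormalColumns

theorem Matrix.eq_one_or_eq_neg_one_of_transpose_mul_self {U : Matrix (Fin 1) (Fin 1) ℝ}
    (hU : Uᵀ * U = 1) : U = 1 ∨ U = -1 := by
  have h := sum_mul_eq_one_apply_of_transpose_mul_self hU 0 0
  simp only [Fin.sum_univ_one, one_apply_eq] at h
  rcases mul_self_eq_one_iff.1 h with h | h
  · exact .inl (ext fun i j => by fin_cases i; fin_cases j; simpa using h)
  · exact .inr (ext fun i j => by fin_cases i; fin_cases j; simpa using h)

theorem two_mul_pow_le {t : ℝ} (ht : 1 ≤ t) {k : ℕ} (hk : 2 ≤ k) :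
    (2 * t) ^ k ≤ 2 * k * (2 * t ^ 2) ^ (k - 1) := by
  obtain ⟨j, rfl⟩ := Nat.exists_eq_add_of_le' hk
  have hk1 : (1 : ℝ) ≤ (j + 2 : ℕ) := by norm_cast; omega
  calc (2 * t) ^ (j + 2) = 2 ^ (j + 2) * t ^ (j + 2) := mul_pow _ _ _
    _ ≤ 2 ^ (j + 2) * t ^ (2 * (j + 1)) := by gcongr; omega
    _ ≤ (j + 2 : ℕ) * (2 ^ (j + 2) * t ^ (2 * (j + 1))) := le_mul_of_one_le_left (by positivity) hk1
    _ = 2 * (j + 2 : ℕ) * (2 * t ^ 2) ^ (j + 2 - 1) := by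
        rw [show j + 2 - 1 = j + 1 by omega, mul_pow, ← pow_mul]; ring

theorem Matrix.exists_finset_orthogonal_fin_one :
    ∃ R : Finset (Matrix (Fin 1) (Fin 1) ℝ),
      (∀ A ∈ R, Aᵀ * A = 1) ∧ R.card ≤ 2 ∧ ∀ U : Matrix (Fin 1) (Fin 1) ℝ, Uᵀ * U = 1 → U ∈ R := by
  refine ⟨{1, -1}, ?_, card_le_two, fun U hU => ?_⟩
  · simp
  · simpa using eq_one_or_eq_neg_one_of_transpose_mul_self hU

theorem natFloor_one_div_sqrt_add_one_pow_le {k : ℕ} (hk : 2 ≤ k) {ε : ℝ} (hε : 0 < ε)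
    (hε1 : ε ≤ 1) :
    (((⌊1 / √ε⌋₊ + 1) ^ (k * k) : ℕ) : ℝ) ≤ (2 * k * (2 / ε) ^ (k - 1)) ^ k := by
  set t := 1 / √ε
  have ht : 1 ≤ t := one_le_one_div (Real.sqrt_pos.2 hε) (Real.sqrt_le_one.2 hε1)
  have hgrid : ((⌊t⌋₊ + 1 : ℕ) : ℝ) ≤ 2 * t := by
    push_cast
    linarith [Nat.floor_le (zero_le_one.trans ht)]
  have ht2 : 2 * t ^ 2 = 2 / ε := by rw [div_pow, Real.sq_sqrt hε.le, one_pow, mul_one_div]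
  rw [Nat.cast_pow, pow_mul, ← ht2]
  gcongr
  exact (pow_le_pow_left₀ (by positivity) hgrid k).trans (two_mul_pow_le ht hk)

theorem Matrix.exists_finset_orthogonal_abs_sub_le {k : ℕ} (hk : 0 < k) {ε : ℝ} (hε : 0 < ε)
    (hε1 : ε ≤ 1) :
    ∃ R : Finset (Matrix (Fin k) (Fin k) ℝ), (∀ A ∈ R, Aᵀ * A = 1) ∧
      (R.card : ℝ) ≤ (2 * k * Real.exp (ε * k / 2) * (2 / ε) ^ (k - 1)) ^ k ∧
      ∀ U : Matrix (Fin k) (Fin k) ℝ, Uᵀ * U = 1 → ∃ V ∈ R, ∀ r i, |V r i - U r i| ≤ 2 * √ε := by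
  have hexp : 1 ≤ Real.exp (ε * k / 2) := Real.one_le_exp (by positivity)
  -- For `k = 1` the grid count `⌊1/√ε⌋ + 1` exceeds the bound, but there are only two
  -- orthogonal `1 × 1` matrices.
  obtain rfl | hk2 : k = 1 ∨ 2 ≤ k := by omega
  · obtain ⟨R, hR_orth, hR_card, hR⟩ := exists_finset_orthogonal_fin_one
    refine ⟨R, hR_orth, ?_, fun U hU => ⟨U, hR U hU, fun r i => by simp⟩⟩
    simpa using (show (R.card : ℝ) ≤ 2 by exact_mod_cast hR_card).trans
      (le_mul_of_one_le_right zero_le_two hexp)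
  · obtain ⟨R, hR_orth, hR_card, hR⟩ := exists_finset_abs_sub_lt_of_abs_le_one
      (S := {U : Matrix (Fin k) (Fin k) ℝ | Uᵀ * U = 1})
      (fun _ hU => abs_le_one_of_transpose_mul_self hU) (δ := 2 * √ε) (by positivity)
    rw [Fintype.card_fin, ← div_div, div_self two_ne_zero] at hR_card
    refine ⟨R, fun A hA => hR_orth hA, ?_, fun U hU => ?_⟩
    · calc (R.card : ℝ) ≤ (2 * k * (2 / ε) ^ (k - 1)) ^ k := by
            simpa using (Nat.cast_le (α := ℝ)).2 hR_card |>.trans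
              (natFloor_one_div_sqrt_add_one_pow_le hk2 hε hε1)
        _ ≤ _ := by gcongr (?_ * _) ^ _; exact le_mul_of_one_le_right (by positivity) hexp
    · obtain ⟨V, hVR, hVU⟩ := hR U hU
      exact ⟨V, hVR, fun r i => (hVU r i).le⟩

/-- An `ε`-net for the `k×k` orthogonal matrices: a finite set `R` of orthogonal matrices of
size at most `(2k·e^{εk/2}·(2/ε)^{k−1})^k` such that every orthogonal `U` has some `U'' ∈ R`
whose columns are nearly aligned with the corresponding columns of `U`:
`(U''[:,i])ᵗU[:,i] > 1 − 12.5kε` and `(U''[:,i])ᵗU[:,j] < 10(√2+1)√(kε)` for `j ≠ i`. -/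
theorem stmt15 (k : ℕ) (hk : 0 < k) (ε : ℝ) (hε : 0 < ε)
    (hε' : ε ≤ 1 / (k * (4 * Real.sqrt 2 + 4))) :
    ∃ R : Finset (Matrix (Fin k) (Fin k) ℝ),
      (∀ A ∈ R, Aᵀ * A = 1) ∧
      (R.card : ℝ) ≤ (2 * k * Real.exp (ε * k / 2) * (2 / ε) ^ (k - 1)) ^ k ∧
      ∀ U : Matrix (Fin k) (Fin k) ℝ, Uᵀ * U = 1 →
        ∃ U'' ∈ R,
          (∀ i : Fin k, 1 - 12.5 * k * ε < ∑ r : Fin k, U'' r i * U r i) ∧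
          (∀ i j : Fin k, j ≠ i →
            ∑ r : Fin k, U'' r i * U r j < 10 * (Real.sqrt 2 + 1) * Real.sqrt (k * ε)) := by
  have hε1 : ε ≤ 1 := hε'.trans <| div_le_one_of_le₀ (by
    nlinarith [Real.sqrt_nonneg 2, (Nat.one_le_cast (α := ℝ)).2 hk]) (by positivity)
  obtain ⟨R, hR_orth, hR_card, hR_net⟩ := exists_finset_orthogonal_abs_sub_le hk hε hε1
  refine ⟨R, hR_orth, hR_card, fun U hU => ?_⟩
  obtain ⟨V, hVR, hVU⟩ := hR_net U hU
  have hV := hR_orth V hVR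
  have hdist : ∀ i, ∑ r, (V r i - U r i) ^ 2 ≤ 4 * (k * ε) := fun i => by
    have h := sum_sq_sub_le_of_abs_sub_le hVU i
    rw [Fintype.card_fin, mul_pow, Real.sq_sqrt hε.le] at h
    linarith
  have hkε : 0 < k * ε := by positivity
  refine ⟨V, hVR, fun i => ?_, fun i j hji => ?_⟩
  · rw [sum_mul_eq_one_sub_of_transpose_mul_self hU hV]
    linarith [hdist i]
  · calc ∑ r, V r i * U r j ≤ √(4 * (k * ε)) :=
          (sum_mul_le_sqrt_of_transpose_mul_self hU hji).trans (Real.sqrt_le_sqrt (hdist i))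
      _ = 2 * √(k * ε) := by rw [Real.sqrt_mul zero_le_four, show (4 : ℝ) = 2 ^ 2 by norm_num,
          Real.sqrt_sq zero_le_two]
      _ < _ := by nlinarith [Real.sqrt_nonneg 2, Real.sqrt_pos.2 hkε]
end
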